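/- Let E = ℝ^p be a Euclidean space, θ̂ ∈ E, A : E → E a continuous linear map, D_n and D_c finite sets, and μ ≥ 0. For each z ∈ D_n, let f_z : E → ℝ be differentiable at θ̂ with 0 < f_z(θ̂) < 1; set L_z := (θ ↦ −log(f_z(θ))) and L_z^δ := (θ ↦ −log(1 − f_z(θ))). For each v ∈ D_c let g_v ∈ E, and define I_up(z, v) := ⟪g_v, A(∇L_z(θ̂))⟫ and I_rel(z, v) := ⟪g_v, A(∇L_z(θ̂) − ∇L_z^δ(θ̂))⟫. If Σ_{v ∈ D_c} (−I_up(z, v)) ≥ μ for every z ∈ D_n, then Σ_{z ∈ D_n} Σ_{v ∈ D_c} (I_up(z, v) − I_rel(z, v)) = Σ_{z ∈ D_n} (f_z(θ̂)/(1 − f_z(θ̂))) · Σ_{v ∈ D_c} (−I_up(z, v)) ≥ μ · Σ_{z ∈ D_n} f_z(θ̂)/(1 − f_z(θ̂)) ≥ 0. (This is the exact identity and inequality content of Theorem 3: relabelling a flagged multiclass node z of observed class m with the weighted label [0,…,φ_k(z),…,0], whose cross-entropy loss equals −log(1 − f_m(θ)), can lead to a lower approximate risk on the clean set than removing it.) 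-/

import Mathlib

open Real InnerProductSpace
open scoped RealInnerProductSpace

/-!
Both losses are functions of the single score `c = f_z(θ̂)`: `∇(−log f) = −c⁻¹ ∇f` and
`∇(−log (1 − f)) = (1 − c)⁻¹ ∇f`, so the relabelled gradient is `c / (1 − c)` times the negated
original one. Since `I_up − I_rel` is the influence of the relabelled gradient, it equals
`c / (1 − c) · (−I_up)` node by node; the weights are nonnegative for `0 < c < 1`, and summing
the DeGLIF(sum) threshold `μ ≤ ∑_v (−I_up)` against them gives the bound.
-/

theorem HasDerivAt.comp_hasGradientAt {F : Type*} [NormedAddCommGroup F] [InnerProductSpace ℝ F]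
    [CompleteSpace F] {φ : ℝ → ℝ} {φ' : ℝ} {f : F → ℝ} {w x : F}
    (hφ : HasDerivAt φ φ' (f x)) (hf : HasGradientAt f w x) :
    HasGradientAt (fun y => φ (f y)) (φ' • w) x := by
  rw [hasGradientAt_iff_hasFDerivAt, map_smul]
  exact hφ.comp_hasFDerivAt x hf.hasFDerivAt

theorem hasDerivAt_neg_log {c : ℝ} (hc : c ≠ 0) :
    HasDerivAt (fun t => -log t) (-c⁻¹) c :=
  (hasDerivAt_log hc).neg

theorem hasDerivAt_neg_log_one_sub {c : ℝ} (hc : c ≠ 1) :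
    HasDerivAt (fun t => -log (1 - t)) (1 - c)⁻¹ c := by
  have h := (((hasDerivAt_id' c).const_sub 1).log (sub_ne_zero.mpr hc.symm)).neg
  rwa [neg_div, neg_neg, one_div] at h

theorem gradient_neg_log_one_sub_eq_smul {F : Type*} [NormedAddCommGroup F]
    [InnerProductSpace ℝ F] [CompleteSpace F] {f : F → ℝ} {x : F}
    (hf : DifferentiableAt ℝ f x) (h0 : f x ≠ 0) (h1 : f x ≠ 1) :
    gradient (fun θ => -log (1 - f θ)) x
      = (f x / (1 - f x)) • -gradient (fun θ => -log (f θ)) x := by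
  have hgrad := hf.hasGradientAt
  rw [((hasDerivAt_neg_log_one_sub h1).comp_hasGradientAt hgrad).gradient,
    ((hasDerivAt_neg_log h0).comp_hasGradientAt hgrad).gradient, neg_smul, neg_neg, smul_smul]
  field_simp

theorem inner_map_sub_inner_map_sub_eq {E : Type*} [NormedAddCommGroup E] [InnerProductSpace ℝ E]
    (A : E →L[ℝ] E) (g u uδ : E) {r : ℝ} (huδ : uδ = r • -u) :
    ⟪g, A u⟫ - ⟪g, A (u - uδ)⟫ = r * -⟪g, A u⟫ := by
  rw [map_sub, inner_sub_right, sub_sub_cancel, huδ, map_smul, map_neg, inner_smul_right,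
    inner_neg_right]

theorem Finset.mul_sum_le_sum_mul {ι R : Type*} [CommSemiring R] [PartialOrder R]
    [IsOrderedRing R] (s : Finset ι) {μ : R} {r b : ι → R}
    (hr : ∀ i ∈ s, 0 ≤ r i) (hb : ∀ i ∈ s, μ ≤ b i) :
    μ * ∑ i ∈ s, r i ≤ ∑ i ∈ s, r i * b i := by
  rw [Finset.mul_sum]
  exact Finset.sum_le_sum fun i hi => by
    rw [mul_comm]
    exact mul_le_mul_of_nonneg_left (hb i hi) (hr i hi)

/-- Theorem 3 (multiclass case): relabelling a flagged node `z` of observed class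
`m` with the weighted label (whose cross-entropy loss is `−log(1 − f_z(θ))`) can
lead to a lower approximate risk on the clean set than removing it:
`∑_z ∑_v (I_up − I_rel) = ∑_z (f_z/(1−f_z))·∑_v(−I_up) ≥ μ·∑_z f_z/(1−f_z) ≥ 0`. -/
theorem deglif_relabel_multiclass {p : ℕ} {α β : Type*}
    (Dn : Finset α) (Dc : Finset β)
    (θhat : EuclideanSpace ℝ (Fin p))
    (A : EuclideanSpace ℝ (Fin p) →L[ℝ] EuclideanSpace ℝ (Fin p))
    (μ : ℝ) (hμ : 0 ≤ μ)
    (f : α → EuclideanSpace ℝ (Fin p) → ℝ)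
    (hdiff : ∀ z ∈ Dn, DifferentiableAt ℝ (f z) θhat)
    (h0 : ∀ z ∈ Dn, 0 < f z θhat) (h1 : ∀ z ∈ Dn, f z θhat < 1)
    (g : β → EuclideanSpace ℝ (Fin p))
    (L Lδ : α → EuclideanSpace ℝ (Fin p) → ℝ)
    (hL : ∀ z ∈ Dn, L z = fun θ => -Real.log (f z θ))
    (hLδ : ∀ z ∈ Dn, Lδ z = fun θ => -Real.log (1 - f z θ))
    (Iup Irel : α → β → ℝ)
    (hIup : ∀ z v, Iup z v = ⟪g v, A (gradient (L z) θhat)⟫)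
    (hIrel : ∀ z v, Irel z v = ⟪g v, A (gradient (L z) θhat - gradient (Lδ z) θhat)⟫)
    (hflag : ∀ z ∈ Dn, μ ≤ ∑ v ∈ Dc, -(Iup z v)) :
    (∑ z ∈ Dn, ∑ v ∈ Dc, (Iup z v - Irel z v))
        = ∑ z ∈ Dn, (f z θhat / (1 - f z θhat)) * ∑ v ∈ Dc, -(Iup z v)
    ∧ μ * (∑ z ∈ Dn, f z θhat / (1 - f z θhat))
        ≤ ∑ z ∈ Dn, ∑ v ∈ Dc, (Iup z v - Irel z v)
    ∧ 0 ≤ μ * (∑ z ∈ Dn, f z θhat / (1 - f z θhat)) := by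
  have hgap : ∀ z ∈ Dn, ∀ v,
      Iup z v - Irel z v = (f z θhat / (1 - f z θhat)) * -(Iup z v) := fun z hz v => by
    rw [hIup, hIrel]
    refine inner_map_sub_inner_map_sub_eq A _ _ _ ?_
    rw [hL z hz, hLδ z hz]
    exact gradient_neg_log_one_sub_eq_smul (hdiff z hz) (h0 z hz).ne' (h1 z hz).ne
  have hsum : ∑ z ∈ Dn, ∑ v ∈ Dc, (Iup z v - Irel z v)
      = ∑ z ∈ Dn, (f z θhat / (1 - f z θhat)) * ∑ v ∈ Dc, -(Iup z v) :=
    Finset.sum_congr rfl fun z hz => by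
      rw [Finset.mul_sum]
      exact Finset.sum_congr rfl fun v _ => hgap z hz v
  have hweight : ∀ z ∈ Dn, 0 ≤ f z θhat / (1 - f z θhat) := fun z hz =>
    div_nonneg (h0 z hz).le (sub_nonneg.mpr (h1 z hz).le)
  refine ⟨hsum, hsum ▸ Finset.mul_sum_le_sum_mul Dn hweight hflag, ?_⟩
  exact mul_nonneg hμ (Finset.sum_nonneg hweight)
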